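/- arXiv:0803.2924 — 3 statements merged into one kernel-verified Lean document; each statement's English description precedes it below -/
import Mathlib

section
/- Suppose f ∈ C²(R^{1,q}_+) is harmonic for the signature-(1,q) Laplacian, homogeneous of degree ρ ∈ R, and its restriction to S^{1,q} depends only on the first coordinate, i.e., there is a C² function P on [1,∞) with f(x) = P(x₁) whenever x·x = 1 and x₁ > 0. Then P satisfies the differential equation (1−t²)P''(t) + (1−n)tP'(t) + ρ(ρ−2+n)P(t) = 0 for t > 1, where n = 1+q. -/
/-!
Homogeneity forces `f y = (y·y)^{ρ/2} P(y₁ (y·y)^{-1/2})` on the forward cone. At a point `x` of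
`S^{1,q}` with `x₁ = t`, every second derivative `∂ᵢ² f(x)` is therefore the second derivative
at `0` of `s ↦ (1 + 2βs + εs²)^{ρ/2} P((t + δs)(1 + 2βs + εs²)^{-1/2})`, with `β = εᵢxᵢ`,
`ε = εᵢ` and `δ = [i = 1]`. Summed with the signs `εᵢ` of the form, these depend on `x` only
through `x·x = 1` and `x₁ = t`, and `Δf(x) = 0` becomes the equation for `P`.
-/

open scoped BigOperators

noncomputable section

def eps (p : ℕ) {n : ℕ} (i : Fin n) : ℝ := if (i : ℕ) < p then 1 else -1

def qdot (p : ℕ) {n : ℕ} (x y : Fin n → ℝ) : ℝ := ∑ i, eps p i * x i * y i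

def lapR (p : ℕ) {n : ℕ} (f : (Fin n → ℝ) → ℝ) (x : Fin n → ℝ) : ℝ :=
  ∑ i, eps p i * fderiv ℝ (fun y => fderiv ℝ f y (Pi.single i 1)) x (Pi.single i 1)

open Filter Topology

def HasSecondDerivAt (f f' : ℝ → ℝ) (f'' a : ℝ) : Prop :=
  (∀ᶠ s in 𝓝 a, HasDerivAt f (f' s) s) ∧ HasDerivAt f' f'' a

namespace HasSecondDerivAt

variable {f f' g g' : ℝ → ℝ} {f'' g'' a : ℝ}

theorem hasDerivAt (hf : HasSecondDerivAt f f' f'' a) : HasDerivAt f (f' a) a :=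
  hf.1.self_of_nhds

theorem deriv_deriv (hf : HasSecondDerivAt f f' f'' a) : deriv (deriv f) a = f'' := by
  have h : deriv f =ᶠ[𝓝 a] f' := hf.1.mono fun _ hs => hs.deriv
  rw [h.deriv_eq, hf.2.deriv]

theorem mul (hf : HasSecondDerivAt f f' f'' a) (hg : HasSecondDerivAt g g' g'' a) :
    HasSecondDerivAt (fun s => f s * g s) (fun s => f' s * g s + f s * g' s)
      (f'' * g a + 2 * f' a * g' a + f a * g'') a := by
  refine ⟨(hf.1.and hg.1).mono fun s hs => hs.1.mul hs.2, ?_⟩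
  exact ((hf.2.fun_mul hg.hasDerivAt).fun_add (hf.hasDerivAt.fun_mul hg.2)).congr_deriv (by ring)

theorem comp {P P' : ℝ → ℝ} {P'' : ℝ} (hP : HasSecondDerivAt P P' P'' (g a))
    (hg : HasSecondDerivAt g g' g'' a) :
    HasSecondDerivAt (fun s => P (g s)) (fun s => P' (g s) * g' s)
      (P'' * g' a ^ 2 + P' (g a) * g'') a := by
  refine ⟨((hg.hasDerivAt.continuousAt.tendsto.eventually hP.1).and hg.1).mono
    fun s hs => hs.1.comp s hs.2, ?_⟩
  exact ((hP.2.comp a hg.hasDerivAt).fun_mul hg.2).congr_deriv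
    (by simp only [Function.comp_apply]; ring)

end HasSecondDerivAt

theorem hasSecondDerivAt_rpow_const {a : ℝ} (ha : a ≠ 0) (c : ℝ) :
    HasSecondDerivAt (fun s => s ^ c) (fun s => c * s ^ (c - 1))
      (c * ((c - 1) * a ^ (c - 1 - 1))) a :=
  ⟨Eventually.mono (isOpen_ne.mem_nhds ha) fun _ hs => Real.hasDerivAt_rpow_const (Or.inl hs),
    (Real.hasDerivAt_rpow_const (Or.inl ha)).const_mul c⟩

theorem hasSecondDerivAt_quadratic (a b c x : ℝ) :
    HasSecondDerivAt (fun s => a + b * s + c * s ^ 2) (fun s => b + 2 * c * s) (2 * c) x := by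
  refine ⟨Eventually.of_forall fun s => ?_, ?_⟩
  · exact ((((hasDerivAt_id' s).const_mul b).const_add a).fun_add
      ((hasDerivAt_pow 2 s).const_mul c)).congr_deriv
        (by simp only [mul_one, Nat.cast_ofNat, Nat.add_one_sub_one, pow_one]; ring)
  · exact (((hasDerivAt_id' x).const_mul (2 * c)).const_add b).congr_deriv (by ring)

theorem ContDiffAt.differentiableAt_fderiv_apply {E F : Type*} [NormedAddCommGroup E]
    [NormedSpace ℝ E] [NormedAddCommGroup F] [NormedSpace ℝ F] {f : E → F} {x : E}
    (hf : ContDiffAt ℝ 2 f x) (v : E) : DifferentiableAt ℝ (fun y => fderiv ℝ f y v) x :=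
  ((hf.fderiv_right (m := 1) (by norm_num)).differentiableAt (by norm_num)).clm_apply
    (differentiableAt_const v)

theorem ContDiffAt.hasSecondDerivAt {f : ℝ → ℝ} {a : ℝ} (hf : ContDiffAt ℝ 2 f a) :
    HasSecondDerivAt f (deriv f) (deriv (deriv f) a) a :=
  ⟨(hf.eventually (by simp)).mono fun _ hs => (hs.differentiableAt (by norm_num)).hasDerivAt,
    (hf.differentiableAt_fderiv_apply 1).hasDerivAt⟩

theorem ContDiffAt.fderiv_fderiv_apply_eq_deriv_deriv {E F : Type*} [NormedAddCommGroup E]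
    [NormedSpace ℝ E] [NormedAddCommGroup F] [NormedSpace ℝ F] {f : E → F} {x : E}
    (hf : ContDiffAt ℝ 2 f x) (v : E) :
    fderiv ℝ (fun y => fderiv ℝ f y v) x v = deriv (deriv fun s : ℝ => f (x + s • v)) 0 := by
  have hline : Tendsto (fun s : ℝ => x + s • v) (𝓝 0) (𝓝 x) := by
    simpa using (show Continuous fun s : ℝ => x + s • v by fun_prop).tendsto 0
  have hderiv : deriv (fun s : ℝ => f (x + s • v)) =ᶠ[𝓝 0] fun s => fderiv ℝ f (x + s • v) v :=
    (hline.eventually (hf.eventually (by simp))).mono fun s hs =>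
      (hs.differentiableAt (by norm_num)).deriv_comp_add_smul
  have hd : DifferentiableAt ℝ (fun y => fderiv ℝ f y v) (x + (0 : ℝ) • v) := by
    simpa using hf.differentiableAt_fderiv_apply v
  rw [hderiv.deriv_eq, hd.deriv_comp_add_smul, zero_smul, add_zero]

/-- `homogeneousExtension ρ P (y·y) y₁` is the degree-`ρ` homogeneous function equal to `P y₁`
on `S^{1,q}`. -/
def homogeneousExtension (ρ : ℝ) (P : ℝ → ℝ) (a b : ℝ) : ℝ :=
  a ^ (ρ / 2) * P (b * a ^ (-(1 / 2) : ℝ))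

theorem deriv_deriv_homogeneousExtension {P P' : ℝ → ℝ} {P'' t : ℝ}
    (hP : HasSecondDerivAt P P' P'' t) (ρ β ε δ : ℝ) :
    deriv (deriv fun s => homogeneousExtension ρ P (1 + 2 * β * s + ε * s ^ 2) (t + δ * s)) 0 =
      (ρ * (ρ - 2) * β ^ 2 + ρ * ε) * P t
        + (2 * ρ * β * (δ - t * β) - 2 * δ * β + 3 * t * β ^ 2 - t * ε) * P' t
        + (δ - t * β) ^ 2 * P'' := by
  have hu := hasSecondDerivAt_quadratic 1 (2 * β) ε 0
  have hw : HasSecondDerivAt (fun s => t + δ * s) (fun _ => δ) 0 0 := by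
    simpa using hasSecondDerivAt_quadratic t δ 0 0
  have hR := (hasSecondDerivAt_rpow_const (by norm_num) (ρ / 2)).comp hu
  have hφ := hw.mul ((hasSecondDerivAt_rpow_const (by norm_num) (-(1 / 2))).comp hu)
  have hPφ := HasSecondDerivAt.comp (by convert hP using 1; simp) hφ
  refine (hR.mul hPφ).deriv_deriv.trans ?_
  simp only [mul_zero, add_zero, ne_eq, OfNat.ofNat_ne_zero, not_false_eq_true, zero_pow,
    Real.one_rpow, mul_one, one_div, neg_mul, inv_mul_cancel_left₀, mul_neg, zero_add, one_mul]
  ring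

theorem eps_one_zero {n : ℕ} : eps 1 (0 : Fin (n + 1)) = 1 := if_pos Nat.zero_lt_one

theorem eps_one_of_ne_zero {n : ℕ} {i : Fin (n + 1)} (hi : i ≠ 0) : eps 1 i = -1 :=
  if_neg fun h => hi (Fin.ext (Nat.lt_one_iff.mp h))

theorem qdot_smul (p : ℕ) {n : ℕ} (r : ℝ) (x : Fin n → ℝ) :
    qdot p (r • x) (r • x) = r ^ 2 * qdot p x x := by
  simp only [qdot, Finset.mul_sum, Pi.smul_apply, smul_eq_mul]
  exact Finset.sum_congr rfl fun _ _ => by ring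

theorem qdot_add_smul_single (p : ℕ) {n : ℕ} (x : Fin n → ℝ) (i : Fin n) (s : ℝ) :
    qdot p (x + s • Pi.single i 1) (x + s • Pi.single i 1) =
      qdot p x x + 2 * (eps p i * x i) * s + eps p i * s ^ 2 := by
  have hterm : ∀ j, eps p j * (x + s • Pi.single i 1 : Fin n → ℝ) j
      * (x + s • Pi.single i 1 : Fin n → ℝ) j =
      eps p j * x j * x j + if j = i then 2 * (eps p i * x i) * s + eps p i * s ^ 2 else 0 := by
    intro j
    by_cases h : j = i
    · subst h
      simp only [Pi.add_apply, Pi.smul_apply, Pi.single_eq_same, smul_eq_mul, if_true]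
      ring
    · simp [h]
  simp only [qdot, hterm, Finset.sum_add_distrib, Finset.sum_ite_eq', Finset.mem_univ, if_true]
  ring

theorem eq_homogeneousExtension {n : ℕ} [NeZero n] {p : ℕ} {ρ : ℝ} {f : (Fin n → ℝ) → ℝ}
    {P : ℝ → ℝ} (hhom : ∀ x, 0 < qdot p x x → ∀ l : ℝ, 0 < l → f (l • x) = l ^ ρ * f x)
    (hPf : ∀ x, qdot p x x = 1 → 0 < x 0 → f x = P (x 0)) {y : Fin n → ℝ}
    (hy : 0 < qdot p y y) (hy0 : 0 < y 0) :
    f y = homogeneousExtension ρ P (qdot p y y) (y 0) := by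
  set r := Real.sqrt (qdot p y y) with hr_def
  have hr : 0 < r := Real.sqrt_pos.2 hy
  have hz : qdot p (r⁻¹ • y) (r⁻¹ • y) = 1 := by
    rw [qdot_smul, inv_pow, Real.sq_sqrt hy.le, inv_mul_cancel₀ hy.ne']
  have hz0 : 0 < (r⁻¹ • y) 0 := by simpa using mul_pos (inv_pos.2 hr) hy0
  calc f y = f (r • r⁻¹ • y) := by rw [smul_inv_smul₀ hr.ne']
    _ = r ^ ρ * P (r⁻¹ * y 0) := by rw [hhom _ (by rw [hz]; exact one_pos) r hr, hPf _ hz hz0]; rfl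
    _ = homogeneousExtension ρ P (qdot p y y) (y 0) := by
      rw [homogeneousExtension, hr_def, Real.sqrt_eq_rpow, ← Real.rpow_mul hy.le,
        one_div_mul_eq_div, mul_comm (y 0), Real.rpow_neg hy.le]

theorem eventuallyEq_homogeneousExtension_line {n : ℕ} [NeZero n] {p : ℕ} {ρ : ℝ}
    {f : (Fin n → ℝ) → ℝ} {P : ℝ → ℝ}
    (hhom : ∀ x, 0 < qdot p x x → ∀ l : ℝ, 0 < l → f (l • x) = l ^ ρ * f x)
    (hPf : ∀ x, qdot p x x = 1 → 0 < x 0 → f x = P (x 0)) {x : Fin n → ℝ}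
    (hx : qdot p x x = 1) (hx0 : 0 < x 0) (i : Fin n) :
    (fun s : ℝ => f (x + s • Pi.single i 1)) =ᶠ[𝓝 0] fun s =>
      homogeneousExtension ρ P (1 + 2 * (eps p i * x i) * s + eps p i * s ^ 2)
        (x 0 + (Pi.single i 1 : Fin n → ℝ) 0 * s) := by
  have hQ : ∀ᶠ s in 𝓝 (0 : ℝ), 0 < 1 + 2 * (eps p i * x i) * s + eps p i * s ^ 2 :=
    continuousAt_const.eventually_lt (by fun_prop) (by norm_num)
  have h0 : ∀ᶠ s in 𝓝 (0 : ℝ), 0 < x 0 + (Pi.single i 1 : Fin n → ℝ) 0 * s :=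
    continuousAt_const.eventually_lt (by fun_prop) (by simpa using hx0)
  filter_upwards [hQ, h0] with s hsQ hs0
  have hyQ := qdot_add_smul_single p x i s
  rw [hx] at hyQ
  rw [← hyQ] at hsQ ⊢
  have hy0 : (x + s • Pi.single i 1 : Fin n → ℝ) 0 = x 0 + (Pi.single i 1 : Fin n → ℝ) 0 * s :=
    by simp [mul_comm]
  rw [← hy0] at hs0 ⊢
  exact eq_homogeneousExtension hhom hPf hsQ hs0

theorem exists_qdot_self_eq_one_and_apply_zero {q : ℕ} (hq : 1 ≤ q) {t : ℝ} (ht : 1 ≤ t) :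
    ∃ x : Fin (q + 1) → ℝ, qdot 1 x x = 1 ∧ x 0 = t := by
  obtain ⟨m, rfl⟩ := Nat.exists_eq_add_of_le' hq
  refine ⟨Fin.cons t (Fin.cons (Real.sqrt (t ^ 2 - 1)) 0), ?_, rfl⟩
  simp only [qdot, Fin.sum_univ_succ, Fin.cons_zero, Fin.cons_succ, Pi.zero_apply, mul_zero,
    Finset.sum_const_zero, add_zero, eps_one_zero, eps_one_of_ne_zero (Fin.succ_ne_zero _)]
  linear_combination -Real.mul_self_sqrt (by nlinarith : (0 : ℝ) ≤ t ^ 2 - 1)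

theorem lapR_one_eq_of_homogeneous {q : ℕ} {ρ : ℝ} {f : (Fin (q + 1) → ℝ) → ℝ} {P : ℝ → ℝ}
    (hhom : ∀ x, 0 < qdot 1 x x → ∀ l : ℝ, 0 < l → f (l • x) = l ^ ρ * f x)
    (hPf : ∀ x, qdot 1 x x = 1 → 0 < x 0 → f x = P (x 0)) {x : Fin (q + 1) → ℝ}
    (hx : qdot 1 x x = 1) (hf : ContDiffAt ℝ 2 f x) {t : ℝ} (hx0 : x 0 = t) (ht : 0 < t)
    (hP : HasSecondDerivAt P (deriv P) (deriv (deriv P) t) t) :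
    lapR 1 f x = (1 - t ^ 2) * deriv (deriv P) t + (1 - ((q + 1 : ℕ) : ℝ)) * t * deriv P t
        + ρ * (ρ - 2 + ((q + 1 : ℕ) : ℝ)) * P t := by
  have hline : ∀ i, eps 1 i * fderiv ℝ (fun y => fderiv ℝ f y (Pi.single i 1)) x (Pi.single i 1) =
      (eps 1 i * x i * x i) * (ρ * (ρ - 2) * P t + (3 - 2 * ρ) * t * deriv P t
          + t ^ 2 * deriv (deriv P) t)
        + (ρ * P t - t * deriv P t)
        + if i = 0 then 2 * (ρ - 1) * t * deriv P t + (1 - 2 * t ^ 2) * deriv (deriv P) t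
          else 0 := by
    intro i
    rw [hf.fderiv_fderiv_apply_eq_deriv_deriv,
      (eventuallyEq_homogeneousExtension_line hhom hPf hx (hx0 ▸ ht) i).deriv.deriv_eq, hx0,
      deriv_deriv_homogeneousExtension hP]
    by_cases hi : i = 0
    · subst hi
      rw [eps_one_zero, Pi.single_eq_same, if_pos rfl, hx0]
      ring
    · rw [eps_one_of_ne_zero hi, Pi.single_eq_of_ne' hi, if_neg hi]
      ring
  have hQ : ∑ i, eps 1 i * x i * x i = 1 := hx
  rw [lapR, Finset.sum_congr rfl fun i _ => hline i, Finset.sum_add_distrib,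
    Finset.sum_add_distrib, ← Finset.sum_mul, hQ]
  simp only [Finset.sum_const, Finset.card_univ, Fintype.card_fin, nsmul_eq_mul,
    Finset.sum_ite_eq', Finset.mem_univ, if_true]
  push_cast
  ring

/-- If `f` is harmonic for the signature-(1,q) Laplacian, homogeneous of degree `ρ`,
and its restriction to `S^{1,q}` is `P(x₁)`, then `P` satisfies
`(1−t²)P'' + (1−n)tP' + ρ(ρ−2+n)P = 0` for `t > 1` (with `n = 1 + q`). -/
theorem invariant_harmonic_ode (q : ℕ) (hq : 1 ≤ q) (ρ : ℝ)
    (f : (Fin (q + 1) → ℝ) → ℝ) (P : ℝ → ℝ)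
    (hsmooth : ∀ x, 0 < qdot 1 x x → ContDiffAt ℝ 2 f x)
    (hharm : ∀ x, 0 < qdot 1 x x → lapR 1 f x = 0)
    (hhom : ∀ x, 0 < qdot 1 x x → ∀ l : ℝ, 0 < l → f (l • x) = l ^ ρ * f x)
    (hP : ContDiffOn ℝ 2 P (Set.Ici 1))
    (hPf : ∀ x : Fin (q + 1) → ℝ, qdot 1 x x = 1 → 0 < x 0 → f x = P (x 0)) :
    ∀ t : ℝ, 1 < t →
      (1 - t ^ 2) * deriv (deriv P) t + (1 - ((q + 1 : ℕ) : ℝ)) * t * deriv P t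
        + ρ * (ρ - 2 + ((q + 1 : ℕ) : ℝ)) * P t = 0 := by
  intro t ht
  obtain ⟨x, hx, hx0⟩ := exists_qdot_self_eq_one_and_apply_zero hq ht.le
  have hxpos : 0 < qdot 1 x x := hx ▸ one_pos
  rw [← lapR_one_eq_of_homogeneous hhom hPf hx (hsmooth x hxpos) hx0 (by linarith)
    (hP.contDiffAt (Ici_mem_nhds ht)).hasSecondDerivAt]
  exact hharm x hxpos
end
end

section
/- Let n ≥ 3 and consider the second-order ODE (1−x²)P'' + (1−n)xP' + ρ(ρ−2+n)P = 0, which has a regular singular point at x = 1 with indicial equation m(m + (n−3)/2) = 0 there; then any two solutions of this ODE that are C² on [1,∞) (one-sided at 1) are linearly dependent. -/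
open Set Filter intervalIntegral MeasureTheory

noncomputable section

lemma key_unique (n : ℕ) (hn : 3 ≤ n) (lam : ℝ) (Q : ℝ → ℝ)
    (hs : ContDiffOn ℝ 2 Q (Set.Ici 1))
    (hode : ∀ t ∈ Set.Ici (1 : ℝ),
      (1 - t ^ 2) * derivWithin (derivWithin Q (Set.Ici 1)) (Set.Ici 1) t
        + (1 - (n : ℝ)) * t * derivWithin Q (Set.Ici 1) t + lam * Q t = 0)
    (h0 : Q 1 = 0) :
    ∀ t ∈ Set.Ici (1 : ℝ), Q t = 0 := by
  have hn' : (3:ℝ) ≤ (n:ℝ) := by exact_mod_cast hn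
  obtain ⟨α, hα_def⟩ : ∃ a : ℝ, a = ((n:ℝ) - 3)/2 := ⟨_, rfl⟩
  obtain ⟨β, hβ_def⟩ : ∃ b : ℝ, b = ((n:ℝ) - 1)/2 := ⟨_, rfl⟩
  have hα : 0 ≤ α := by rw [hα_def]; linarith
  have hβ : 1 ≤ β := by rw [hβ_def]; linarith
  have hβα : β = α + 1 := by rw [hα_def, hβ_def]; ring
  have h2β : 2*β = (n:ℝ) - 1 := by rw [hβ_def]; ring
  set D1 := derivWithin Q (Set.Ici 1) with hD1_def
  set D2 := derivWithin D1 (Set.Ici 1) with hD2_def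
  have hud : UniqueDiffOn ℝ (Set.Ici (1:ℝ)) := uniqueDiffOn_Ici 1
  have hQc : ContinuousOn Q (Set.Ici 1) := hs.continuousOn
  have hD1s : ContDiffOn ℝ 1 D1 (Set.Ici 1) := hs.derivWithin hud (by norm_num)
  have hD1c : ContinuousOn D1 (Set.Ici 1) := hD1s.continuousOn
  have hQd : ∀ t : ℝ, 1 < t → HasDerivAt Q (D1 t) t := by
    intro t ht
    exact (((hs.differentiableOn (by norm_num)) t (le_of_lt ht)).hasDerivWithinAt).hasDerivAt
      (Ici_mem_nhds ht)
  have hD1d : ∀ t : ℝ, 1 < t → HasDerivAt D1 (D2 t) t := by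
    intro t ht
    exact (((hD1s.differentiableOn (by norm_num)) t (le_of_lt ht)).hasDerivWithinAt).hasDerivAt
      (Ici_mem_nhds ht)
  clear_value D2
  clear_value D1
  clear hD1_def hD2_def
  have hD11 : D1 1 = 0 := by
    have h := hode 1 Set.self_mem_Ici
    rw [h0] at h
    have h1n : (1:ℝ) - (n:ℝ) ≠ 0 := by intro hh; rw [sub_eq_zero] at hh; linarith
    have h2 : (1 - (n:ℝ)) * D1 1 = 0 := by nlinarith [h]
    exact (mul_eq_zero.mp h2).resolve_left h1n
  obtain ⟨v, hv_def⟩ : ∃ v : ℝ → ℝ, v = fun s : ℝ => (s^2 - 1) ^ α := ⟨_, rfl⟩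
  obtain ⟨w, hw_def⟩ : ∃ w : ℝ → ℝ, w = fun s : ℝ => (s^2 - 1) ^ β := ⟨_, rfl⟩
  have hrpow_cont : ∀ p : ℝ, 0 ≤ p → ContinuousOn (fun s : ℝ => (s^2 - 1) ^ p) (Set.Ici 1) := by
    intro p hp s _
    exact (ContinuousAt.comp (Real.continuousAt_rpow_const _ p (Or.inr hp))
      (by fun_prop)).continuousWithinAt
  have hv_cont : ContinuousOn v (Set.Ici 1) := by rw [hv_def]; exact hrpow_cont α hα
  have hw_cont : ContinuousOn w (Set.Ici 1) := by
    rw [hw_def]; exact hrpow_cont β (le_trans zero_le_one hβ)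
  have hv0 : ∀ s : ℝ, 1 ≤ s → 0 ≤ v s := by
    intro s hs'
    rw [hv_def]
    exact Real.rpow_nonneg (by nlinarith) α
  have hwpos : ∀ t : ℝ, 1 < t → 0 < w t := by
    intro t ht
    rw [hw_def]
    exact Real.rpow_pos_of_pos (by nlinarith) β
  have hw1 : w 1 = 0 := by
    rw [hw_def]
    show ((1:ℝ)^2 - 1) ^ β = 0
    norm_num
    exact Real.zero_rpow (by linarith)
  have hw_deriv : ∀ t : ℝ, 1 < t → HasDerivAt w (((n:ℝ)-1) * t * v t) t := by
    intro t ht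
    have h1 : HasDerivAt (fun s : ℝ => s ^ β) (β * (t^2-1) ^ (β - 1)) (t^2-1) :=
      Real.hasDerivAt_rpow_const (Or.inl (by nlinarith))
    have h2 : HasDerivAt (fun s : ℝ => s^2 - 1) (2*t) t := by
      simpa using ((hasDerivAt_pow 2 t).sub_const 1)
    have h3 := h1.comp t h2
    rw [hv_def, hw_def]
    refine h3.congr_deriv (Eq.symm ?_)
    have hβ1 : β - 1 = α := by rw [hβα]; ring
    rw [hβ1]
    show ((n:ℝ)-1) * t * (t^2-1)^α = β * (t^2-1)^α * (2*t)
    rw [← h2β]; ring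
  have hW_deriv : ∀ t : ℝ, 1 < t →
      HasDerivAt (fun s => w s * D1 s) (lam * (v t * Q t)) t := by
    intro t ht
    have h := (hw_deriv t ht).mul (hD1d t ht)
    refine h.congr_deriv (Eq.symm ?_)
    have hvw : w t = v t * (t^2 - 1) := by
      rw [hv_def, hw_def]
      show (t^2-1)^β = (t^2-1)^α * (t^2-1)
      rw [hβα, Real.rpow_add (by nlinarith : (0:ℝ) < t^2-1), Real.rpow_one]
    have hode' := hode t (le_of_lt ht)
    rw [hvw]
    linear_combination (v t) * hode'
  have hIcc_sub : ∀ t : ℝ, Set.Icc (1:ℝ) t ⊆ Set.Ici 1 := fun t => Set.Icc_subset_Ici_self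
  have hvQ_int : ∀ t : ℝ, 1 ≤ t →
      IntervalIntegrable (fun s => lam * (v s * Q s)) volume 1 t := by
    intro t ht
    apply ContinuousOn.intervalIntegrable
    rw [Set.uIcc_of_le ht]
    exact continuousOn_const.mul (((hv_cont.mono (hIcc_sub t))).mul (hQc.mono (hIcc_sub t)))
  have hFTC : ∀ t : ℝ, 1 ≤ t → w t * D1 t = ∫ s in (1:ℝ)..t, lam * (v s * Q s) := by
    intro t ht
    have h := intervalIntegral.integral_eq_sub_of_hasDeriv_right_of_le ht
      ((hw_cont.mono (hIcc_sub t)).mul (hD1c.mono (hIcc_sub t)))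
      (fun x hx => ((hW_deriv x hx.1).hasDerivWithinAt))
      (hvQ_int t ht)
    rw [h, Pi.mul_apply, Pi.mul_apply, hw1, zero_mul, sub_zero]
  have hvint : ∀ t : ℝ, 1 ≤ t → ((n:ℝ)-1) * (∫ s in (1:ℝ)..t, v s) ≤ w t := by
    intro t ht
    have hint2 : IntervalIntegrable (fun s => ((n:ℝ)-1) * s * v s) volume 1 t := by
      apply ContinuousOn.intervalIntegrable
      rw [Set.uIcc_of_le ht]
      exact (continuousOn_const.mul continuousOn_id).mul (hv_cont.mono (hIcc_sub t))
    have hint1 : IntervalIntegrable (fun s => ((n:ℝ)-1) * v s) volume 1 t := by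
      apply ContinuousOn.intervalIntegrable
      rw [Set.uIcc_of_le ht]
      exact continuousOn_const.mul (hv_cont.mono (hIcc_sub t))
    have hFTCw : (∫ s in (1:ℝ)..t, ((n:ℝ)-1) * s * v s) = w t := by
      have h := intervalIntegral.integral_eq_sub_of_hasDeriv_right_of_le ht
        (hw_cont.mono (hIcc_sub t))
        (fun x hx => ((hw_deriv x hx.1).hasDerivWithinAt))
        hint2
      rw [h, hw1, sub_zero]
    have hmono : (∫ s in (1:ℝ)..t, ((n:ℝ)-1) * v s) ≤ ∫ s in (1:ℝ)..t, ((n:ℝ)-1) * s * v s := by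
      apply intervalIntegral.integral_mono_on ht hint1 hint2
      intro x hx
      have h1 := hv0 x hx.1
      nlinarith [mul_nonneg (mul_nonneg (by linarith : (0:ℝ) ≤ (n:ℝ)-1) h1) (by linarith [hx.1] : (0:ℝ) ≤ x - 1)]
    calc ((n:ℝ)-1) * (∫ s in (1:ℝ)..t, v s)
        = ∫ s in (1:ℝ)..t, ((n:ℝ)-1) * v s := (intervalIntegral.integral_const_mul _ _).symm
      _ ≤ ∫ s in (1:ℝ)..t, ((n:ℝ)-1) * s * v s := hmono
      _ = w t := hFTCw
  obtain ⟨K, hK_def⟩ : ∃ K : ℝ, K = |lam| / ((n:ℝ) - 1) := ⟨_, rfl⟩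
  have hnpos : (0:ℝ) < (n:ℝ) - 1 := by linarith
  have hK0 : 0 ≤ K := by rw [hK_def]; exact div_nonneg (abs_nonneg _) (le_of_lt hnpos)
  have main : ∀ b : ℝ, 1 ≤ b → ∀ t ∈ Set.Icc (1:ℝ) b, Q t = 0 := by
    intro b hb
    obtain ⟨M, hM⟩ := (isCompact_Icc (a := (1:ℝ)) (b := b)).exists_bound_of_continuousOn
      (hQc.mono (hIcc_sub b))
    have hM0 : 0 ≤ M := le_trans (norm_nonneg _) (hM 1 ⟨le_rfl, hb⟩)
    have hInd : ∀ k : ℕ, ∀ t ∈ Set.Icc (1:ℝ) b,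
        |Q t| ≤ M * (K * (t - 1))^k / (k.factorial : ℝ) := by
      intro k
      induction k with
      | zero => intro t ht; simpa using hM t ht
      | succ k ih =>
        have hd1 : ∀ t ∈ Set.Icc (1:ℝ) b,
            |D1 t| ≤ K * (M * (K * (t-1))^k / (k.factorial : ℝ)) := by
          intro t ht
          rcases eq_or_lt_of_le ht.1 with h1 | h1
          · have hd0 : D1 t = 0 := by rw [← h1]; exact hD11
            rw [hd0, abs_zero]
            exact mul_nonneg hK0 (div_nonneg (mul_nonneg hM0
              (pow_nonneg (mul_nonneg hK0 (by linarith [ht.1])) k)) (by positivity))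
          · have hwt := hwpos t h1
            have hft := hFTC t (le_of_lt h1)
            obtain ⟨C, hC_def⟩ : ∃ C : ℝ, C = M * (K * (t-1))^k / (k.factorial : ℝ) := ⟨_, rfl⟩
            have hC0 : 0 ≤ C := by
              rw [hC_def]
              exact div_nonneg (mul_nonneg hM0 (pow_nonneg (mul_nonneg hK0
                (by linarith [h1.le] : (0:ℝ) ≤ t - 1)) k)) (by positivity)
            have hint1 : IntervalIntegrable (fun s => |lam * (v s * Q s)|) volume 1 t := by
              exact (hvQ_int t (le_of_lt h1)).abs
            have hint2 : IntervalIntegrable (fun s => |lam| * C * v s) volume 1 t := by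
              apply ContinuousOn.intervalIntegrable
              rw [Set.uIcc_of_le (le_of_lt h1)]
              exact continuousOn_const.mul (hv_cont.mono (hIcc_sub t))
            have habs : |w t * D1 t| ≤ |lam| * C * (w t / ((n:ℝ)-1)) := by
              rw [hft]
              calc |∫ s in (1:ℝ)..t, lam * (v s * Q s)|
                  ≤ ∫ s in (1:ℝ)..t, |lam * (v s * Q s)| :=
                    intervalIntegral.abs_integral_le_integral_abs (le_of_lt h1)
                _ ≤ ∫ s in (1:ℝ)..t, |lam| * C * v s := by
                    apply intervalIntegral.integral_mono_on (le_of_lt h1) hint1 hint2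
                    intro x hx
                    have hx1 : x ∈ Set.Icc (1:ℝ) b := ⟨hx.1, le_trans hx.2 ht.2⟩
                    have hQx := ih x hx1
                    have hvx := hv0 x hx.1
                    have hxt : (K * (x-1))^k ≤ (K * (t-1))^k := by
                      apply pow_le_pow_left₀ (by nlinarith [hx.1])
                      nlinarith [hx.2]
                    have hQC : |Q x| ≤ C := by
                      rw [hC_def]

                      calc |Q x| ≤ M * (K * (x-1))^k / (k.factorial : ℝ) := hQx
                        _ ≤ M * (K * (t-1))^k / (k.factorial : ℝ) := by
                            have hkf : (0:ℝ) < (k.factorial : ℝ) := by positivity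
                            exact (div_le_div_iff_of_pos_right hkf).mpr (mul_le_mul_of_nonneg_left hxt hM0)
                    rw [abs_mul, abs_mul, abs_of_nonneg hvx]
                    calc |lam| * (v x * |Q x|) ≤ |lam| * (v x * C) := by
                          apply mul_le_mul_of_nonneg_left ?_ (abs_nonneg lam)
                          exact mul_le_mul_of_nonneg_left hQC hvx
                      _ = |lam| * C * v x := by ring
                _ = |lam| * C * ∫ s in (1:ℝ)..t, v s := intervalIntegral.integral_const_mul _ _
                _ ≤ |lam| * C * (w t / ((n:ℝ)-1)) := by
                    apply mul_le_mul_of_nonneg_left ?_ (mul_nonneg (abs_nonneg _) hC0)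
                    rw [le_div_iff₀ hnpos]
                    linarith [hvint t (le_of_lt h1)]
            have habs2 : w t * |D1 t| ≤ w t * (K * C) := by
              have heq : |w t * D1 t| = w t * |D1 t| := by
                rw [abs_mul, abs_of_pos hwt]
              rw [heq] at habs
              calc w t * |D1 t| ≤ |lam| * C * (w t / ((n:ℝ)-1)) := habs
                _ = w t * (K * C) := by rw [hK_def]; ring
            have := le_of_mul_le_mul_left habs2 hwt
            rw [hC_def] at this
            exact this
        intro t ht
        have hD1int : IntervalIntegrable D1 volume 1 t := by
          apply ContinuousOn.intervalIntegrable
          rw [Set.uIcc_of_le ht.1]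
          exact hD1c.mono (hIcc_sub t)
        have hQft : Q t = ∫ s in (1:ℝ)..t, D1 s := by
          have h := intervalIntegral.integral_eq_sub_of_hasDeriv_right_of_le ht.1
            (hQc.mono (hIcc_sub t))
            (fun x hx => ((hQd x hx.1).hasDerivWithinAt))
            hD1int
          rw [h, h0, sub_zero]
        have hint3 : IntervalIntegrable (fun s => K * (M * (K * (s-1))^k / (k.factorial : ℝ))) volume 1 t := by
          apply Continuous.intervalIntegrable
          fun_prop
        have hQb : |Q t| ≤ ∫ s in (1:ℝ)..t, K * (M * (K * (s-1))^k / (k.factorial : ℝ)) := by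
          rw [hQft]
          calc |∫ s in (1:ℝ)..t, D1 s| ≤ ∫ s in (1:ℝ)..t, |D1 s| :=
                intervalIntegral.abs_integral_le_integral_abs ht.1
            _ ≤ ∫ s in (1:ℝ)..t, K * (M * (K * (s-1))^k / (k.factorial : ℝ)) := by
                apply intervalIntegral.integral_mono_on ht.1 hD1int.abs hint3
                intro x hx
                exact hd1 x ⟨hx.1, le_trans hx.2 ht.2⟩
        have hpint : (∫ s in (1:ℝ)..t, (s-1)^k) = (t-1)^(k+1) / ((k:ℝ)+1) := by
          have := intervalIntegral.integral_comp_sub_right (fun x : ℝ => x^k) 1 (a := 1) (b := t)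
          rw [this]
          norm_num [integral_pow]
        have hcomp : (∫ s in (1:ℝ)..t, K * (M * (K * (s-1))^k / (k.factorial : ℝ)))
            = M * (K * (t-1))^(k+1) / ((k+1).factorial : ℝ) := by
          have heq : (fun s : ℝ => K * (M * (K * (s-1))^k / (k.factorial : ℝ)))
              = fun s : ℝ => (K * M * K^k / (k.factorial : ℝ)) * (s-1)^k := by
            funext s; rw [mul_pow]; ring
          rw [heq, intervalIntegral.integral_const_mul, hpint, Nat.factorial_succ]
          push_cast
          rw [mul_pow]
          have hk : (k.factorial : ℝ) ≠ 0 := Nat.cast_ne_zero.mpr k.factorial_ne_zero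
          have hk1 : ((k:ℝ)+1) ≠ 0 := by positivity
          field_simp
          ring
        rw [hcomp] at hQb
        exact hQb
    intro t ht
    have hlim : Tendsto (fun k : ℕ => M * ((K * (t-1))^k / (k.factorial : ℝ))) atTop (nhds 0) := by
      have := (FloorSemiring.tendsto_pow_div_factorial_atTop (K * (t-1))).const_mul M
      simpa using this
    have hineq : ∀ k : ℕ, |Q t| ≤ M * ((K * (t-1))^k / (k.factorial : ℝ)) := by
      intro k
      have := hInd k t ht
      rw [mul_div_assoc] at this
      exact this
    have hle : |Q t| ≤ 0 := ge_of_tendsto hlim (Filter.Eventually.of_forall hineq)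
    exact abs_eq_zero.mp (le_antisymm hle (abs_nonneg _))
  intro t ht
  exact main t ht t ⟨ht, le_rfl⟩

/-- For `n ≥ 3`, the solution space on `[1,∞)` of
`(1−x²)P'' + (1−n)xP' + ρ(ρ−2+n)P = 0` is at most one-dimensional:
any two C² solutions (one-sided derivatives at 1) are linearly dependent. -/
theorem ode_solutions_linearly_dependent (n : ℕ) (hn : 3 ≤ n) (ρ : ℝ)
    (P₁ P₂ : ℝ → ℝ)
    (h₁s : ContDiffOn ℝ 2 P₁ (Set.Ici 1)) (h₂s : ContDiffOn ℝ 2 P₂ (Set.Ici 1))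
    (h₁ : ∀ t ∈ Set.Ici (1 : ℝ),
      (1 - t ^ 2) * derivWithin (derivWithin P₁ (Set.Ici 1)) (Set.Ici 1) t
        + (1 - (n : ℝ)) * t * derivWithin P₁ (Set.Ici 1) t
        + ρ * (ρ - 2 + (n : ℝ)) * P₁ t = 0)
    (h₂ : ∀ t ∈ Set.Ici (1 : ℝ),
      (1 - t ^ 2) * derivWithin (derivWithin P₂ (Set.Ici 1)) (Set.Ici 1) t
        + (1 - (n : ℝ)) * t * derivWithin P₂ (Set.Ici 1) t
        + ρ * (ρ - 2 + (n : ℝ)) * P₂ t = 0) :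
    ∃ a b : ℝ, ¬(a = 0 ∧ b = 0) ∧ ∀ t ∈ Set.Ici (1 : ℝ), a * P₁ t + b * P₂ t = 0 := by
  have hud : UniqueDiffOn ℝ (Set.Ici (1:ℝ)) := uniqueDiffOn_Ici 1
  set lam : ℝ := ρ * (ρ - 2 + (n:ℝ)) with hlam
  have comb : ∀ a b : ℝ, ∀ t ∈ Set.Ici (1:ℝ),
      (1 - t ^ 2) * derivWithin (derivWithin (fun s => a * P₁ s + b * P₂ s) (Set.Ici 1)) (Set.Ici 1) t
        + (1 - (n : ℝ)) * t * derivWithin (fun s => a * P₁ s + b * P₂ s) (Set.Ici 1) t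
        + lam * (a * P₁ t + b * P₂ t) = 0 := by
    intro a b t ht
    have hd1 : ∀ x ∈ Set.Ici (1:ℝ), derivWithin (fun s => a * P₁ s + b * P₂ s) (Set.Ici 1) x
        = a * derivWithin P₁ (Set.Ici 1) x + b * derivWithin P₂ (Set.Ici 1) x := by
      intro x hx
      have h1 := ((h₁s.differentiableOn (by norm_num)) x hx).hasDerivWithinAt
      have h2 := ((h₂s.differentiableOn (by norm_num)) x hx).hasDerivWithinAt
      exact ((h1.const_mul a).add (h2.const_mul b)).derivWithin (hud x hx)
    have hP1s := h₁s.derivWithin hud (by norm_num : (1:WithTop ℕ∞)+1 ≤ 2)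
    have hP2s := h₂s.derivWithin hud (by norm_num : (1:WithTop ℕ∞)+1 ≤ 2)
    have hd2 : derivWithin (derivWithin (fun s => a * P₁ s + b * P₂ s) (Set.Ici 1)) (Set.Ici 1) t
        = a * derivWithin (derivWithin P₁ (Set.Ici 1)) (Set.Ici 1) t
          + b * derivWithin (derivWithin P₂ (Set.Ici 1)) (Set.Ici 1) t := by
      rw [derivWithin_congr hd1 (hd1 t ht)]
      have h1 := ((hP1s.differentiableOn (by norm_num)) t ht).hasDerivWithinAt
      have h2 := ((hP2s.differentiableOn (by norm_num)) t ht).hasDerivWithinAt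
      exact ((h1.const_mul a).add (h2.const_mul b)).derivWithin (hud t ht)
    rw [hd2, hd1 t ht]
    linear_combination a * h₁ t ht + b * h₂ t ht
  have hcd : ∀ a b : ℝ, ContDiffOn ℝ 2 (fun s => a * P₁ s + b * P₂ s) (Set.Ici 1) :=
    fun a b => (contDiffOn_const.mul h₁s).add (contDiffOn_const.mul h₂s)
  by_cases hc : P₁ 1 = 0 ∧ P₂ 1 = 0
  · refine ⟨1, 0, by norm_num, fun t ht => ?_⟩
    have := key_unique n hn lam (fun s => 1 * P₁ s + 0 * P₂ s) (hcd 1 0) (comb 1 0)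
      (by simp [hc.1]) t ht
    simpa using this
  · refine ⟨P₂ 1, -(P₁ 1), ?_, ?_⟩
    · rintro ⟨ha, hb⟩
      exact hc ⟨neg_eq_zero.mp hb, ha⟩
    · intro t ht
      have := key_unique n hn lam (fun s => P₂ 1 * P₁ s + (-(P₁ 1)) * P₂ s)
        (hcd (P₂ 1) (-(P₁ 1))) (comb (P₂ 1) (-(P₁ 1))) (by ring) t ht
      simpa using this
end
end

section
/- Let q ≥ 2, let K ≅ SO(q) act on R^{1+q} fixing the first coordinate and rotating the last q, let c ∈ R^{1+q} be a nonzero isotropic vector for the signature-(1,q) form with c₁ > 0, and let ρ ∈ R. Then the function u(x) = ∫_K (kc·x)^ρ dk on S^{1,q} (Haar probability measure on K) is K-invariant, and its degree-ρ homogeneous extension f(x) = |x|^ρ u(x/|x|) to {x : x·x > 0, x₁ > 0} satisfies Δf = 0 for the signature-(1,q) Laplacian. -/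
/-!
Let `ν` be the image of `μ` under `k ↦ kc`: a finite measure carried by the compact slice
`{w | w·w = 0, w₁ = c₁}` of the future null cone, with `u(x) = ∫ (w·x)^ρ dν(w)`.
Invariance follows from left invariance of `μ` and `(kc)·(Ax) = (Aᵀkc)·x`.
On the forward cone the homogeneous extension of `u` is `y ↦ ∫ (w·y)^ρ dν(w)`. A future null
vector pairs positively with every vector of the forward cone (reverse Cauchy–Schwarz), so the
integrand is smooth in `y` with derivatives jointly continuous in `(w, y)`; as `ν` lives on a
compact set we may differentiate twice under the integral, and
`Δ (w·y)^ρ = ρ(ρ-1)(w·y)^(ρ-2) (w·w) = 0`.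
-/

open scoped BigOperators
open MeasureTheory

noncomputable section

instance {q : ℕ} : MeasurableSpace (Matrix (Fin q) (Fin q) ℝ) :=
  inferInstanceAs (MeasurableSpace (Fin q → Fin q → ℝ))

/-- Action of a `q × q` matrix on `ℝ^{1+q}` fixing the first coordinate. -/
def act {q : ℕ} (A : Matrix (Fin q) (Fin q) ℝ) (x : Fin (q + 1) → ℝ) : Fin (q + 1) → ℝ :=
  Fin.cons (x 0) (A.mulVec (Fin.tail x))

open Topology Matrix

instance {q : ℕ} : BorelSpace (Matrix (Fin q) (Fin q) ℝ) :=
  inferInstanceAs (BorelSpace (Fin q → Fin q → ℝ))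

lemma eps_mul_self (p : ℕ) {n : ℕ} (i : Fin n) : eps p i * eps p i = 1 := by
  unfold eps; split_ifs <;> norm_num

lemma qdot_single (p : ℕ) {n : ℕ} (w : Fin n → ℝ) (i : Fin n) :
    qdot p w (Pi.single i 1) = eps p i * w i := by
  simp [qdot, Pi.single_apply]

lemma sum_eps_mul_qdot_single_sq (p : ℕ) {n : ℕ} (w : Fin n → ℝ) :
    ∑ i, eps p i * qdot p w (Pi.single i 1) ^ 2 = qdot p w w := by
  refine Finset.sum_congr rfl fun i _ => ?_
  rw [qdot_single]
  linear_combination (eps p i * w i * w i) * eps_mul_self p i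

lemma qdot_div_right (p : ℕ) {n : ℕ} (w y : Fin n → ℝ) (s : ℝ) :
    qdot p w (fun i => y i / s) = qdot p w y / s := by
  simp [qdot, Finset.sum_div, mul_div_assoc]

lemma continuous_qdot (p : ℕ) {n : ℕ} :
    Continuous fun z : (Fin n → ℝ) × (Fin n → ℝ) => qdot p z.1 z.2 := by
  unfold qdot; fun_prop

lemma continuous_qdot_left (p : ℕ) {n : ℕ} (v : Fin n → ℝ) :
    Continuous fun w : Fin n → ℝ => qdot p w v := by
  unfold qdot; fun_prop

lemma qdot_one_eq_mul_sub_dotProduct {q : ℕ} (u v : Fin (q + 1) → ℝ) :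
    qdot 1 u v = u 0 * v 0 - Fin.tail u ⬝ᵥ Fin.tail v := by
  simp [qdot, Fin.sum_univ_succ, eps, dotProduct, Fin.tail, sub_eq_add_neg]

lemma qdot_one_self_eq {q : ℕ} (u : Fin (q + 1) → ℝ) :
    qdot 1 u u = u 0 ^ 2 - ∑ i : Fin q, u i.succ ^ 2 := by
  simp [qdot_one_eq_mul_sub_dotProduct, dotProduct, Fin.tail, sq]

lemma continuous_act_left {q : ℕ} (x : Fin (q + 1) → ℝ) :
    Continuous fun A : Matrix (Fin q) (Fin q) ℝ => act A x :=
  continuous_const.finCons (continuous_id.matrix_mulVec continuous_const)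

lemma tail_act {q : ℕ} (A : Matrix (Fin q) (Fin q) ℝ) (x : Fin (q + 1) → ℝ) :
    Fin.tail (act A x) = A *ᵥ Fin.tail x := Fin.tail_cons _ _

lemma act_mul {q : ℕ} (A B : Matrix (Fin q) (Fin q) ℝ) (x : Fin (q + 1) → ℝ) :
    act (A * B) x = act A (act B x) := by
  simp [act, Fin.tail_cons, Matrix.mulVec_mulVec]

lemma qdot_act_right {q : ℕ} (A : Matrix (Fin q) (Fin q) ℝ) (u v : Fin (q + 1) → ℝ) :
    qdot 1 u (act A v) = qdot 1 (act Aᵀ u) v := by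
  rw [qdot_one_eq_mul_sub_dotProduct, qdot_one_eq_mul_sub_dotProduct, tail_act, tail_act,
    Matrix.dotProduct_mulVec, ← Matrix.mulVec_transpose]
  rfl

lemma qdot_act_act {q : ℕ} {A : Matrix (Fin q) (Fin q) ℝ}
    (hA : A ∈ Matrix.orthogonalGroup (Fin q) ℝ) (u v : Fin (q + 1) → ℝ) :
    qdot 1 (act A u) (act A v) = qdot 1 u v := by
  rw [qdot_act_right, ← act_mul]
  have : Aᵀ * A = 1 := Unitary.star_mul_self_of_mem hA
  simp [this, act, Fin.cons_self_tail]

def forwardCone (n : ℕ) : Set (Fin (n + 1) → ℝ) := {y | 0 < qdot 1 y y ∧ 0 < y 0}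

def futureNullCone (n : ℕ) : Set (Fin (n + 1) → ℝ) := {w | qdot 1 w w = 0 ∧ 0 < w 0}

def nullSlice (n : ℕ) (a : ℝ) : Set (Fin (n + 1) → ℝ) := {w | qdot 1 w w = 0 ∧ w 0 = a}

lemma isOpen_forwardCone (n : ℕ) : IsOpen (forwardCone n) :=
  (isOpen_lt continuous_const ((continuous_qdot 1).comp (continuous_id.prodMk continuous_id))).inter
    (isOpen_lt continuous_const (continuous_apply 0))

lemma qdot_pos_of_mem_futureNullCone {q : ℕ} {w y : Fin (q + 1) → ℝ}
    (hw : w ∈ futureNullCone q) (hy : y ∈ forwardCone q) : 0 < qdot 1 w y := by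
  obtain ⟨hww, hw0⟩ := hw
  obtain ⟨hyy, hy0⟩ := hy
  rw [qdot_one_self_eq, sub_eq_zero] at hww
  rw [qdot_one_self_eq] at hyy
  have cs := Finset.sum_mul_sq_le_sq_mul_sq Finset.univ (fun i : Fin q => w i.succ)
    fun i => y i.succ
  rw [← hww] at cs
  have hlt : (∑ i : Fin q, w i.succ * y i.succ) ^ 2 < (w 0 * y 0) ^ 2 := by
    rw [mul_pow]
    exact cs.trans_lt (mul_lt_mul_of_pos_left (by linarith) (by positivity))
  rw [qdot_one_eq_mul_sub_dotProduct,
    show Fin.tail w ⬝ᵥ Fin.tail y = ∑ i : Fin q, w i.succ * y i.succ from rfl]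
  linarith [le_abs_self (∑ i : Fin q, w i.succ * y i.succ),
    abs_lt_of_sq_lt_sq hlt (mul_pos hw0 hy0).le]

lemma abs_apply_le_of_qdot_self_eq_zero {q : ℕ} {w : Fin (q + 1) → ℝ} (hw : qdot 1 w w = 0)
    (i : Fin (q + 1)) : |w i| ≤ |w 0| := by
  refine Fin.cases le_rfl (fun j => sq_le_sq.1 ?_) i
  rw [qdot_one_self_eq, sub_eq_zero] at hw
  exact hw ▸ Finset.single_le_sum (fun i _ => sq_nonneg (w (Fin.succ i))) (Finset.mem_univ j)

lemma isCompact_nullSlice (n : ℕ) (a : ℝ) : IsCompact (nullSlice n a) := by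
  refine Metric.isCompact_of_isClosed_isBounded ?_ ?_
  · exact (isClosed_eq ((continuous_qdot 1).comp (continuous_id.prodMk continuous_id))
      continuous_const).inter (isClosed_eq (continuous_apply 0) continuous_const)
  · refine (Metric.isBounded_iff_subset_closedBall 0).2 ⟨|a|, fun w ⟨hw, hw0⟩ => ?_⟩
    rw [mem_closedBall_zero_iff, pi_norm_le_iff_of_nonneg (abs_nonneg a)]
    exact fun i => hw0 ▸ abs_apply_le_of_qdot_self_eq_zero hw i

lemma nullSlice_subset_futureNullCone (n : ℕ) {a : ℝ} (ha : 0 < a) :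
    nullSlice n a ⊆ futureNullCone n :=
  fun _ hw => ⟨hw.1, hw.2 ▸ ha⟩

lemma act_mem_nullSlice {q : ℕ} {c : Fin (q + 1) → ℝ} (hc : qdot 1 c c = 0)
    {A : Matrix (Fin q) (Fin q) ℝ} (hA : A ∈ Matrix.orthogonalGroup (Fin q) ℝ) :
    act A c ∈ nullSlice q (c 0) :=
  ⟨(qdot_act_act hA c c).trans hc, rfl⟩

lemma Filter.EventuallyEq.lapR_eq (p : ℕ) {n : ℕ} {f g : (Fin n → ℝ) → ℝ} {x : Fin n → ℝ}
    (h : f =ᶠ[𝓝 x] g) : lapR p f x = lapR p g x := by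
  refine Finset.sum_congr rfl fun i _ => ?_
  have hi : (fun y => fderiv ℝ f y (Pi.single i 1)) =ᶠ[𝓝 x]
      fun y => fderiv ℝ g y (Pi.single i 1) :=
    (h.fderiv (𝕜 := ℝ)).mono fun y hy => by simp only [hy]
  rw [hi.fderiv_eq]

section ParametricIntegral

variable {W H : Type*} [TopologicalSpace W] [T2Space W] [MeasurableSpace W]
  [OpensMeasurableSpace W] {ν : Measure W} [IsFiniteMeasure ν] {S : Set W}

lemma integrable_of_continuousOn_of_ae_mem {E : Type*} [NormedAddCommGroup E]
    (hS : IsCompact S) (hνS : ∀ᵐ w ∂ν, w ∈ S) {f : W → E} (hf : ContinuousOn f S) :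
    Integrable f ν := by
  simpa [IntegrableOn, Measure.restrict_eq_self_of_ae_mem hνS] using
    hf.integrableOn_compact (μ := ν) hS

lemma integrable_of_continuousOn_uncurry {E : Type*} [NormedAddCommGroup E]
    [TopologicalSpace H] (hS : IsCompact S) (hνS : ∀ᵐ w ∂ν, w ∈ S) {U : Set H}
    {g : H → W → E} (hg : ContinuousOn (Function.uncurry g) (U ×ˢ S)) {x : H} (hx : x ∈ U) :
    Integrable (g x) ν :=
  integrable_of_continuousOn_of_ae_mem hS hνS
    (hg.comp (continuousOn_const.prodMk continuousOn_id) fun _ hw => ⟨hx, hw⟩)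

lemma hasFDerivAt_integral_of_continuousOn_of_isCompact {E : Type*} [NormedAddCommGroup E]
    [NormedSpace ℝ E] [NormedAddCommGroup H] [NormedSpace ℝ H] [LocallyCompactSpace H]
    (hS : IsCompact S) (hνS : ∀ᵐ w ∂ν, w ∈ S) {U : Set H} (hU : IsOpen U) {F : H → W → E}
    {F' : H → W → H →L[ℝ] E} (hF : ContinuousOn (Function.uncurry F) (U ×ˢ S))
    (hF' : ContinuousOn (Function.uncurry F') (U ×ˢ S))
    (hdiff : ∀ x ∈ U, ∀ w ∈ S, HasFDerivAt (F · w) (F' x w) x) {x₀ : H} (hx₀ : x₀ ∈ U) :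
    HasFDerivAt (fun x => ∫ w, F x w ∂ν) (∫ w, F' x₀ w ∂ν) x₀ := by
  obtain ⟨K, hK, hKU, hKc⟩ := local_compact_nhds (hU.mem_nhds hx₀)
  obtain ⟨C, hC⟩ := (hKc.prod hS).exists_bound_of_continuousOn
    (hF'.mono (Set.prod_mono hKU subset_rfl))
  refine hasFDerivAt_integral_of_dominated_of_fderiv_le (bound := fun _ => C) hK ?_
    (integrable_of_continuousOn_uncurry hS hνS hF hx₀)
    (integrable_of_continuousOn_uncurry hS hνS hF' hx₀).aestronglyMeasurable ?_
    (integrable_const C) ?_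
  · filter_upwards [hK] with x hx using
      (integrable_of_continuousOn_uncurry hS hνS hF (hKU hx)).aestronglyMeasurable
  · filter_upwards [hνS] with w hw x hx using hC (x, w) ⟨hx, hw⟩
  · filter_upwards [hνS] with w hw x hx using hdiff x (hKU hx) w hw

end ParametricIntegral

def qdotCLM (p : ℕ) {n : ℕ} (w : Fin n → ℝ) : (Fin n → ℝ) →L[ℝ] ℝ :=
  ∑ i, (eps p i * w i) • ContinuousLinearMap.proj i

lemma qdotCLM_apply (p : ℕ) {n : ℕ} (w y : Fin n → ℝ) : qdotCLM p w y = qdot p w y := by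
  simp [qdotCLM, qdot, mul_assoc]

lemma continuous_qdotCLM (p : ℕ) {n : ℕ} : Continuous (qdotCLM p (n := n)) := by
  unfold qdotCLM; fun_prop

section NullAverage

variable {q : ℕ} {ν : Measure (Fin (q + 1) → ℝ)} {S : Set (Fin (q + 1) → ℝ)}

lemma continuousOn_qdot_rpow (hS : S ⊆ futureNullCone q) (σ : ℝ) :
    ContinuousOn (fun z : (Fin (q + 1) → ℝ) × (Fin (q + 1) → ℝ) => qdot 1 z.2 z.1 ^ σ)
      (forwardCone q ×ˢ S) :=
  ((continuous_qdot 1).comp continuous_swap).continuousOn.rpow_const fun _ hz =>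
    Or.inl (qdot_pos_of_mem_futureNullCone (hS hz.2) hz.1).ne'

lemma continuousOn_qdot_rpow_left (hS : S ⊆ futureNullCone q) (σ : ℝ)
    {x : Fin (q + 1) → ℝ} (hx : x ∈ forwardCone q) :
    ContinuousOn (fun w => qdot 1 w x ^ σ) S :=
  (continuous_qdot_left 1 x).continuousOn.rpow_const
    fun _ hw => Or.inl (qdot_pos_of_mem_futureNullCone (hS hw) hx).ne'

lemma rpow_mul_integral_qdot_div_rpow (hνS : ∀ᵐ w ∂ν, w ∈ S) (hS : S ⊆ futureNullCone q)
    {y : Fin (q + 1) → ℝ} (hy : y ∈ forwardCone q) {s : ℝ} (hs : 0 < s) (ρ : ℝ) :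
    s ^ ρ * ∫ w, qdot 1 w (fun i => y i / s) ^ ρ ∂ν = ∫ w, qdot 1 w y ^ ρ ∂ν := by
  rw [← integral_const_mul]
  refine integral_congr_ae ?_
  filter_upwards [hνS] with w hw
  have hpos := qdot_pos_of_mem_futureNullCone (hS hw) hy
  rw [qdot_div_right, Real.div_rpow hpos.le hs.le,
    mul_div_cancel₀ _ (Real.rpow_pos_of_pos hs ρ).ne']

variable [IsFiniteMeasure ν]

lemma hasFDerivAt_integral_mul_qdot_rpow (hSc : IsCompact S) (hνS : ∀ᵐ w ∂ν, w ∈ S)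
    (hS : S ⊆ futureNullCone q) {b : (Fin (q + 1) → ℝ) → ℝ} (hb : Continuous b)
    (σ : ℝ) {x : Fin (q + 1) → ℝ} (hx : x ∈ forwardCone q) :
    HasFDerivAt (fun y => ∫ w, b w * qdot 1 w y ^ σ ∂ν)
      (∫ w, (b w * (σ * qdot 1 w x ^ (σ - 1))) • qdotCLM 1 w ∂ν) x := by
  refine hasFDerivAt_integral_of_continuousOn_of_isCompact hSc hνS (isOpen_forwardCone q)
    (F := fun y w => b w * qdot 1 w y ^ σ)
    (F' := fun y w => (b w * (σ * qdot 1 w y ^ (σ - 1))) • qdotCLM 1 w)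
    ((hb.comp continuous_snd).continuousOn.mul (continuousOn_qdot_rpow hS σ))
    (((hb.comp continuous_snd).continuousOn.mul (continuousOn_const.mul
      (continuousOn_qdot_rpow hS (σ - 1)))).smul
      ((continuous_qdotCLM 1).comp continuous_snd).continuousOn) (fun y hy w hw => ?_) hx
  have hpos := qdot_pos_of_mem_futureNullCone (hS hw) hy
  have := (((qdotCLM 1 w).hasFDerivAt (x := y)).rpow_const (p := σ)
    (Or.inl ((qdotCLM_apply 1 w y).symm ▸ hpos.ne'))).const_mul (b w)
  simpa only [qdotCLM_apply, smul_smul] using this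

lemma fderiv_integral_mul_qdot_rpow_apply (hSc : IsCompact S) (hνS : ∀ᵐ w ∂ν, w ∈ S)
    (hS : S ⊆ futureNullCone q) {b : (Fin (q + 1) → ℝ) → ℝ} (hb : Continuous b)
    (σ : ℝ) {x : Fin (q + 1) → ℝ} (hx : x ∈ forwardCone q) (v : Fin (q + 1) → ℝ) :
    fderiv ℝ (fun y => ∫ w, b w * qdot 1 w y ^ σ ∂ν) x v
      = ∫ w, (b w * σ * qdot 1 w v) * qdot 1 w x ^ (σ - 1) ∂ν := by
  rw [(hasFDerivAt_integral_mul_qdot_rpow hSc hνS hS hb σ hx).fderiv,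
    ContinuousLinearMap.integral_apply]
  · simp only [_root_.smul_apply, qdotCLM_apply, smul_eq_mul]
    congr 1 with w
    ring
  · exact integrable_of_continuousOn_uncurry hSc hνS
      (g := fun y w => (b w * (σ * qdot 1 w y ^ (σ - 1))) • qdotCLM 1 w)
      (((hb.comp continuous_snd).continuousOn.mul (continuousOn_const.mul
        (continuousOn_qdot_rpow hS (σ - 1)))).smul
        ((continuous_qdotCLM 1).comp continuous_snd).continuousOn) hx

lemma lapR_integral_qdot_rpow_eq_zero (hSc : IsCompact S) (hνS : ∀ᵐ w ∂ν, w ∈ S)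
    (hS : S ⊆ futureNullCone q) (ρ : ℝ) {x : Fin (q + 1) → ℝ} (hx : x ∈ forwardCone q) :
    lapR 1 (fun y => ∫ w, qdot 1 w y ^ ρ ∂ν) x = 0 := by
  have firstDeriv : ∀ i : Fin (q + 1),
      (fun y => fderiv ℝ (fun y => ∫ w, qdot 1 w y ^ ρ ∂ν) y (Pi.single i 1)) =ᶠ[𝓝 x]
        fun y => ∫ w, ρ * qdot 1 w (Pi.single i 1) * qdot 1 w y ^ (ρ - 1) ∂ν := by
    intro i
    filter_upwards [(isOpen_forwardCone q).mem_nhds hx] with y hy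
    simpa using fderiv_integral_mul_qdot_rpow_apply hSc hνS hS (b := fun _ => 1)
      continuous_const ρ hy (Pi.single i 1)
  have secondDeriv : ∀ i : Fin (q + 1),
      fderiv ℝ (fun y => fderiv ℝ (fun y => ∫ w, qdot 1 w y ^ ρ ∂ν) y (Pi.single i 1)) x
          (Pi.single i 1)
        = ∫ w, ρ * qdot 1 w (Pi.single i 1) * (ρ - 1) * qdot 1 w (Pi.single i 1)
            * qdot 1 w x ^ (ρ - 1 - 1) ∂ν := by
    intro i
    rw [(firstDeriv i).fderiv_eq]
    exact fderiv_integral_mul_qdot_rpow_apply hSc hνS hS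
      ((continuous_qdot_left 1 _).const_mul ρ) (ρ - 1) hx (Pi.single i 1)
  unfold lapR
  simp only [secondDeriv, ← integral_const_mul]
  rw [← integral_finsetSum _ fun i _ => integrable_of_continuousOn_of_ae_mem hSc hνS ?_]
  · refine integral_eq_zero_of_ae ?_
    filter_upwards [hνS] with w hw
    have hterm : ∀ i, eps 1 i * (ρ * qdot 1 w (Pi.single i 1) * (ρ - 1)
        * qdot 1 w (Pi.single i 1) * qdot 1 w x ^ (ρ - 1 - 1))
          = ρ * (ρ - 1) * qdot 1 w x ^ (ρ - 1 - 1) * (eps 1 i * qdot 1 w (Pi.single i 1) ^ 2) :=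
      fun i => by ring
    simp only [hterm, ← Finset.mul_sum, sum_eps_mul_qdot_single_sq]
    exact mul_eq_zero_of_right _ (hS hw).1
  · have hq := continuous_qdot_left 1 (Pi.single i (1 : ℝ))
    have hrpow := continuousOn_qdot_rpow_left hS (ρ - 1 - 1) hx
    fun_prop

end NullAverage

theorem k_average_spherical_harmonic_general (q : ℕ) (ρ : ℝ)
    (c : Fin (q + 1) → ℝ) (hiso : qdot 1 c c = 0) (hc0 : 0 < c 0)
    (μ : Measure (Matrix (Fin q) (Fin q) ℝ)) [IsProbabilityMeasure μ]
    (hsupp : ∀ᵐ A ∂μ, A ∈ Matrix.orthogonalGroup (Fin q) ℝ ∧ A.det = 1)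
    (hinv : ∀ A ∈ Matrix.orthogonalGroup (Fin q) ℝ, A.det = 1 →
      μ.map (fun B => A * B) = μ) :
    (∀ A ∈ Matrix.orthogonalGroup (Fin q) ℝ, A.det = 1 →
      ∀ x : Fin (q + 1) → ℝ, qdot 1 x x = 1 → 0 < x 0 →
        (∫ k, (qdot 1 (act k c) (act A x)) ^ ρ ∂μ)
          = ∫ k, (qdot 1 (act k c) x) ^ ρ ∂μ) ∧
    (∀ x : Fin (q + 1) → ℝ, 0 < qdot 1 x x → 0 < x 0 →
      lapR 1 (fun y => (Real.sqrt (qdot 1 y y)) ^ ρ *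
        ∫ k, (qdot 1 (act k c) (fun i => y i / Real.sqrt (qdot 1 y y))) ^ ρ ∂μ) x = 0) := by
  have hmeas : ∀ y, Measurable fun w : Fin (q + 1) → ℝ => qdot 1 w y ^ ρ :=
    fun y => (continuous_qdot_left 1 y).measurable.pow_const ρ
  constructor
  · intro A hA hdet x _ _
    have hmap := hinv Aᵀ (Unitary.star_mem hA) (by rw [det_transpose, hdet])
    simp only [qdot_act_right A, ← act_mul]
    refine (integral_map (φ := fun B => Aᵀ * B)
      (continuous_const.matrix_mul continuous_id).measurable.aemeasurable
      ((hmeas x).comp (continuous_act_left c).measurable).aestronglyMeasurable).symm.trans ?_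
    rw [hmap]
    rfl
  · intro x hx hx0
    have hact := (continuous_act_left (q := q) c).measurable.aemeasurable (μ := μ)
    have hνS : ∀ᵐ w ∂μ.map (act · c), w ∈ nullSlice q (c 0) :=
      (ae_map_iff hact (isCompact_nullSlice q (c 0)).measurableSet).2
        (hsupp.mono fun k hk => act_mem_nullSlice hiso hk.1)
    have hS := nullSlice_subset_futureNullCone q hc0
    rw [← lapR_integral_qdot_rpow_eq_zero (isCompact_nullSlice q (c 0)) hνS hS ρ ⟨hx, hx0⟩]
    refine Filter.EventuallyEq.lapR_eq 1 ?_
    filter_upwards [(isOpen_forwardCone q).mem_nhds ⟨hx, hx0⟩] with y hy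
    rw [← integral_map hact (hmeas _).aestronglyMeasurable]
    exact rpow_mul_integral_qdot_div_rpow hνS hS hy (Real.sqrt_pos.2 hy.1) ρ

/-- For a nonzero isotropic `c` with `c₁ > 0` and `K ≅ SO(q)` with Haar
probability measure `μ`, the function `u(x) = ∫_K (kc·x)^ρ dk` is `K`-invariant,
and its degree-`ρ` homogeneous extension is harmonic for the (1,q)-Laplacian. -/
theorem k_average_spherical_harmonic (q : ℕ) (hq : 2 ≤ q) (ρ : ℝ)
    (c : Fin (q + 1) → ℝ) (hcne : c ≠ 0) (hiso : qdot 1 c c = 0) (hc0 : 0 < c 0)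
    (μ : Measure (Matrix (Fin q) (Fin q) ℝ)) [IsProbabilityMeasure μ]
    (hsupp : ∀ᵐ A ∂μ, A ∈ Matrix.orthogonalGroup (Fin q) ℝ ∧ A.det = 1)
    (hinv : ∀ A ∈ Matrix.orthogonalGroup (Fin q) ℝ, A.det = 1 →
      μ.map (fun B => A * B) = μ) :
    (∀ A ∈ Matrix.orthogonalGroup (Fin q) ℝ, A.det = 1 →
      ∀ x : Fin (q + 1) → ℝ, qdot 1 x x = 1 → 0 < x 0 →
        (∫ k, (qdot 1 (act k c) (act A x)) ^ ρ ∂μ)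
          = ∫ k, (qdot 1 (act k c) x) ^ ρ ∂μ) ∧
    (∀ x : Fin (q + 1) → ℝ, 0 < qdot 1 x x → 0 < x 0 →
      lapR 1 (fun y => (Real.sqrt (qdot 1 y y)) ^ ρ *
        ∫ k, (qdot 1 (act k c) (fun i => y i / Real.sqrt (qdot 1 y y))) ^ ρ ∂μ) x = 0) :=
  k_average_spherical_harmonic_general q ρ c hiso hc0 μ hsupp hinv
end
end
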